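/- For all columns a, b over A: a ∨ b = b if and only if a ∧ b = a. -/
import Mathlib


/-- One step of Schensted's column matching: try to match the letter `x`
to the smallest still-unmatched letter `y` of the state with `x ≤ y`.
The state is `(remaining unmatched letters of b, matched letters of b)`. -/
def matchStep {n : ℕ} (x : Fin n) (st : Finset (Fin n) × Finset (Fin n)) :
    Finset (Fin n) × Finset (Fin n) :=
  let cand := st.1.filter (fun y => x ≤ y)
  if h : cand.Nonempty then (st.1.erase (cand.min' h), insert (cand.min' h) st.2)
  else st

/-- `colMatch a b` is the set `b_a` of connected (matched) letters of the column `b`,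
obtained by scanning the letters of the column `a` in increasing order and matching
each letter `x` of `a` to the smallest not-yet-matched letter `y` of `b` with `y ≥ x`. -/
def colMatch {n : ℕ} (a b : Finset (Fin n)) : Finset (Fin n) :=
  ((a.sort (· ≤ ·)).foldl (fun st x => matchStep x st) (b, (∅ : Finset (Fin n)))).2

/-- The column `a ∨ b`, with letter set `{a} ∪ b^a`. -/
def vee {n : ℕ} (a b : Finset (Fin n)) : Finset (Fin n) := a ∪ (b \ colMatch a b)

/-- The column `a ∧ b`, with letter set `b_a`. -/
def wedge {n : ℕ} (a b : Finset (Fin n)) : Finset (Fin n) := colMatch a b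

lemma matchStep_union {n : ℕ} (x : Fin n) (st : Finset (Fin n) × Finset (Fin n)) :
    (matchStep x st).1 ∪ (matchStep x st).2 = st.1 ∪ st.2 := by
  unfold matchStep
  by_cases h : (st.1.filter (fun y => x ≤ y)).Nonempty
  · simp only [h, dif_pos]
    have hm : (st.1.filter (fun y => x ≤ y)).min' h ∈ st.1 :=
      Finset.mem_of_mem_filter _ (Finset.min'_mem _ h)
    ext z
    simp only [Finset.mem_union, Finset.mem_erase, Finset.mem_insert]
    constructor
    · rintro (⟨_, hz⟩ | (rfl | hz)) <;> tauto
    · rintro (hz | hz)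
      · by_cases hze : z = (st.1.filter (fun y => x ≤ y)).min' h <;> tauto
      · tauto
  · simp [h]

lemma matchStep_fst_subset {n : ℕ} (x : Fin n) (st : Finset (Fin n) × Finset (Fin n)) :
    (matchStep x st).1 ⊆ st.1 := by
  unfold matchStep
  by_cases h : (st.1.filter (fun y => x ≤ y)).Nonempty
  · simp only [h, dif_pos]; exact Finset.erase_subset _ _
  · simp [h]

lemma matchStep_self_not_mem {n : ℕ} (x : Fin n) (st : Finset (Fin n) × Finset (Fin n)) :
    x ∉ (matchStep x st).1 := by
  unfold matchStep
  by_cases h : (st.1.filter (fun y => x ≤ y)).Nonempty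
  · simp only [h, dif_pos, Finset.mem_erase]
    rintro ⟨hne, hx⟩
    have hxc : x ∈ st.1.filter (fun y => x ≤ y) := by simp [hx]
    have h1 := Finset.min'_le _ _ hxc
    have h2 : x ≤ (st.1.filter (fun y => x ≤ y)).min' h :=
      (Finset.mem_filter.mp (Finset.min'_mem _ h)).2
    exact hne (le_antisymm h2 h1)
  · rw [dif_neg h]
    intro hx
    exact h ⟨x, by simp [hx]⟩

lemma foldl_union {n : ℕ} (l : List (Fin n)) (st : Finset (Fin n) × Finset (Fin n)) :
    (l.foldl (fun st x => matchStep x st) st).1 ∪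
      (l.foldl (fun st x => matchStep x st) st).2 = st.1 ∪ st.2 := by
  induction l generalizing st with
  | nil => rfl
  | cons x xs ih => rw [List.foldl_cons, ih, matchStep_union]

lemma foldl_fst_subset {n : ℕ} (l : List (Fin n)) (st : Finset (Fin n) × Finset (Fin n)) :
    (l.foldl (fun st x => matchStep x st) st).1 ⊆ st.1 := by
  induction l generalizing st with
  | nil => exact subset_rfl
  | cons x xs ih => exact (ih _).trans (matchStep_fst_subset x st)

lemma foldl_not_mem {n : ℕ} (l : List (Fin n)) (st : Finset (Fin n) × Finset (Fin n))
    (x : Fin n) (hx : x ∈ l) : x ∉ (l.foldl (fun st x => matchStep x st) st).1 := by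
  induction l generalizing st with
  | nil => simp at hx
  | cons y ys ih =>
    rw [List.foldl_cons]
    rcases List.mem_cons.mp hx with rfl | hx
    · intro hmem
      exact matchStep_self_not_mem x st (foldl_fst_subset ys _ hmem)
    · exact ih _ hx

lemma colMatch_subset {n : ℕ} (a b : Finset (Fin n)) : colMatch a b ⊆ b := by
  intro x hx
  have := foldl_union (a.sort (· ≤ ·)) (b, (∅ : Finset (Fin n)))
  have hxm : x ∈ b ∪ (∅ : Finset (Fin n)) := by
    rw [← this]; exact Finset.mem_union_right _ hx
  simpa using hxm

lemma inter_subset_colMatch {n : ℕ} (a b : Finset (Fin n)) (x : Fin n)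
    (hxa : x ∈ a) (hxb : x ∈ b) : x ∈ colMatch a b := by
  have hxl : x ∈ a.sort (· ≤ ·) := (Finset.mem_sort _).mpr hxa
  have h1 := foldl_not_mem (a.sort (· ≤ ·)) (b, (∅ : Finset (Fin n))) x hxl
  have h2 := foldl_union (a.sort (· ≤ ·)) (b, (∅ : Finset (Fin n)))
  have : x ∈ (( a.sort (· ≤ ·)).foldl (fun st x => matchStep x st)
      (b, (∅ : Finset (Fin n)))).1 ∪
      ((a.sort (· ≤ ·)).foldl (fun st x => matchStep x st) (b, (∅ : Finset (Fin n)))).2 := by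
    rw [h2]; simpa using hxb
  rcases Finset.mem_union.mp this with h | h
  · exact absurd h h1
  · exact h

/-- For all columns `a, b` over `A`: `a ∨ b = b` if and only if `a ∧ b = a`. -/
theorem vee_eq_right_iff_wedge_eq_left (n : ℕ) (hn : 1 ≤ n) (a b : Finset (Fin n)) :
    vee a b = b ↔ wedge a b = a := by
  unfold vee wedge
  set M := colMatch a b with hM
  have hMb : M ⊆ b := colMatch_subset a b
  constructor
  · intro h
    apply Finset.Subset.antisymm
    · intro x hx
      have hxb : x ∈ b := hMb hx
      rw [← h] at hxb
      rcases Finset.mem_union.mp hxb with h' | h'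
      · exact h'
      · exact absurd (Finset.mem_sdiff.mp h').2 (by simp [hx])
    · intro x hx
      have hxb : x ∈ b := by
        rw [← h]; exact Finset.mem_union_left _ hx
      exact inter_subset_colMatch a b x hx hxb
  · intro h
    rw [h]
    exact Finset.union_sdiff_of_subset (h ▸ hMb)
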